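/- arXiv:1308.2363 — 2 statements merged into one kernel-verified Lean document; each statement's English description precedes it below -/
import Mathlib

section
/- Fix 0 ≤ t < 1 and p ∈ ℝ. Suppose q̄ : [t, 1] → ℝ is twice continuously differentiable and satisfies q̄''(s) = q̄(s) + p on (t, 1), q̄(t) = 0, and q̄'(1) + 2(q̄(1) + p) = 0. Then q̄ is the unique minimizer, over all absolutely continuous q : [t, 1] → ℝ with q(t) = 0 and q' ∈ L², of the functional J(q) = ∫ₜ¹ (½|q'(s)|² + ½|q(s) + p|²) ds + |q(1) + p|². -/
/-!
Write `q = q̄ + h`. Integrating by parts against the Euler–Lagrange equation `q̄'' = q̄ + p`,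
the part of `J(q̄ + h) - J(q̄)` that is linear in `h` reduces to the boundary term
`q̄'(1) h(1) + 2 (q̄(1) + p) h(1)` (as `h(t) = 0`), which the transversality condition
kills. Hence `J(q) = J(q̄) + ∫ (½ h'² + ½ h²) + h(1)²`, and the remainder is positive as soon as the
continuous function `h` is nonzero somewhere on `[t, 1]`.
-/

open MeasureTheory Set intervalIntegral

/-- The functional `J` on `[a, b]`; the derivative `q'` of `q` is passed separately. -/
noncomputable def action (a b p : ℝ) (q q' : ℝ → ℝ) : ℝ :=
  (∫ s in a..b, ((1:ℝ)/2 * q' s ^ 2 + (1:ℝ)/2 * (q s + p) ^ 2)) + (q b + p) ^ 2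

section

variable {a b p : ℝ} {g f f' : ℝ → ℝ}

lemma IntervalIntegrable.sub_continuous_sq (hf : IntervalIntegrable f volume a b)
    (hf2 : IntervalIntegrable (fun s => f s ^ 2) volume a b) (hg : Continuous g) :
    IntervalIntegrable (fun s => (f s - g s) ^ 2) volume a b := by
  have hfg : IntervalIntegrable (fun s => g s * f s) volume a b :=
    hf.continuousOn_mul hg.continuousOn
  have hg2 : IntervalIntegrable (fun s => g s ^ 2) volume a b := (hg.pow 2).intervalIntegrable _ _
  convert (hf2.sub (hfg.const_mul 2)).add hg2 using 2 with s
  ring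

lemma integral_half_sq_add_half_sq_pos (hab : a < b)
    (hf : IntervalIntegrable (fun s => f s ^ 2) volume a b) (hg : ContinuousOn g (Icc a b))
    (hne : ∃ c ∈ Icc a b, g c ≠ 0) :
    0 < ∫ s in a..b, ((1:ℝ)/2 * f s ^ 2 + (1:ℝ)/2 * g s ^ 2) := by
  have hg2 : ContinuousOn (fun s => (1:ℝ)/2 * g s ^ 2) (Icc a b) :=
    continuousOn_const.mul (hg.pow 2)
  obtain ⟨c, hc, hgc⟩ := hne
  calc 0 < ∫ s in a..b, (1:ℝ)/2 * g s ^ 2 :=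
        integral_pos hab hg2 (fun s _ => by positivity) ⟨c, hc, by positivity⟩
    _ ≤ ∫ s in a..b, ((1:ℝ)/2 * f s ^ 2 + (1:ℝ)/2 * g s ^ 2) :=
        integral_mono_on hab.le (hg2.intervalIntegrable_of_Icc hab.le)
          ((hf.const_mul _).add (hg2.intervalIntegrable_of_Icc hab.le))
          (fun s _ => le_add_of_nonneg_left (by positivity))

variable (hab : a ≤ b) (hg : ContDiff ℝ 2 g)
  (hode : ∀ s ∈ Ioo a b, deriv (deriv g) s = g s + p)
  (hf : ∀ s ∈ Icc a b, HasDerivAt f (f' s) s) (hf' : IntervalIntegrable f' volume a b)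
include hab hg hode hf hf'

lemma integral_first_variation_eq :
    ∫ s in a..b, (deriv g s * f' s + (g s + p) * f s) = deriv g b * f b - deriv g a * f a := by
  have hdg : Continuous (deriv g) := hg.continuous_deriv one_le_two
  have hddg : Differentiable ℝ (deriv g) :=
    (hg.iterate_deriv' 1 1).differentiable one_ne_zero
  have hfc : ContinuousOn f (Icc a b) := fun s hs => (hf s hs).continuousAt.continuousWithinAt
  refine integral_eq_sub_of_hasDerivAt_of_le hab (hdg.continuousOn.mul hfc) (fun s hs => ?_) ?_
  · refine ((hddg s).hasDerivAt.mul (hf s (Ioo_subset_Icc_self hs))).congr_deriv ?_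
    rw [hode s hs]
    ring
  · refine (hf'.continuousOn_mul hdg.continuousOn).add (ContinuousOn.intervalIntegrable ?_)
    rw [uIcc_of_le hab]
    exact (hg.continuous.add continuous_const).continuousOn.mul hfc

end

section

variable {a b p : ℝ} {g q q' : ℝ → ℝ}

lemma action_eq_add_of_euler_lagrange (hab : a ≤ b) (hg : ContDiff ℝ 2 g)
    (hode : ∀ s ∈ Ioo a b, deriv (deriv g) s = g s + p)
    (hgb : deriv g b + 2 * (g b + p) = 0)
    (hq : ∀ s ∈ Icc a b, HasDerivAt q (q' s) s) (hq' : IntervalIntegrable q' volume a b)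
    (hq'2 : IntervalIntegrable (fun s => q' s ^ 2) volume a b) (hqa : q a = g a) :
    action a b p q q' = action a b p g (deriv g) +
      ((∫ s in a..b, ((1:ℝ)/2 * (q' s - deriv g s) ^ 2 + (1:ℝ)/2 * (q s - g s) ^ 2))
        + (q b - g b) ^ 2) := by
  have hdg : Continuous (deriv g) := hg.continuous_deriv one_le_two
  have hqc : ContinuousOn q (Icc a b) := fun s hs => (hq s hs).continuousAt.continuousWithinAt
  have hfirst := integral_first_variation_eq (p := p) (f := fun s => q s - g s) hab hg hode
    (fun s hs => (hq s hs).sub (hg.differentiable two_ne_zero s).hasDerivAt)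
    (hq'.sub (hdg.intervalIntegrable a b))
  have hA : IntervalIntegrable
      (fun s => (1:ℝ)/2 * q' s ^ 2 + (1:ℝ)/2 * (q s + p) ^ 2) volume a b := by
    refine (hq'2.const_mul _).add (ContinuousOn.intervalIntegrable ?_)
    rw [uIcc_of_le hab]
    exact continuousOn_const.mul ((hqc.add continuousOn_const).pow 2)
  have hB : IntervalIntegrable
      (fun s => (1:ℝ)/2 * deriv g s ^ 2 + (1:ℝ)/2 * (g s + p) ^ 2) volume a b :=
    (by fun_prop : Continuous _).intervalIntegrable _ _
  have hC : IntervalIntegrable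
      (fun s => (1:ℝ)/2 * (q' s - deriv g s) ^ 2 + (1:ℝ)/2 * (q s - g s) ^ 2) volume a b := by
    refine ((hq'.sub_continuous_sq hq'2 hdg).const_mul _).add (ContinuousOn.intervalIntegrable ?_)
    rw [uIcc_of_le hab]
    exact continuousOn_const.mul ((hqc.sub hg.continuous.continuousOn).pow 2)
  have hsplit : (∫ s in a..b, ((1:ℝ)/2 * q' s ^ 2 + (1:ℝ)/2 * (q s + p) ^ 2))
      - (∫ s in a..b, ((1:ℝ)/2 * deriv g s ^ 2 + (1:ℝ)/2 * (g s + p) ^ 2))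
      - (∫ s in a..b, ((1:ℝ)/2 * (q' s - deriv g s) ^ 2 + (1:ℝ)/2 * (q s - g s) ^ 2))
      = deriv g b * (q b - g b) - deriv g a * (q a - g a) := by
    rw [← integral_sub hA hB, ← integral_sub (hA.sub hB) hC, ← hfirst]
    refine integral_congr fun s _ => ?_
    ring
  rw [hqa, sub_self, mul_zero, sub_zero] at hsplit
  unfold action
  linear_combination hsplit + (q b - g b) * hgb

end

theorem stmt_8_general (t : ℝ) (ht1 : t < 1) (p : ℝ)
    (qb : ℝ → ℝ) (hqb : ContDiff ℝ 2 qb)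
    (hode : ∀ s ∈ Set.Ioo t 1, deriv (deriv qb) s = qb s + p)
    (hqbt : qb t = 0) (hqb1 : deriv qb 1 + 2 * (qb 1 + p) = 0) :
    let J : (ℝ → ℝ) → (ℝ → ℝ) → ℝ := fun q q' =>
      (∫ s in t..1, ((1:ℝ)/2 * q' s ^ 2 + (1:ℝ)/2 * (q s + p) ^ 2)) + (q 1 + p) ^ 2
    ∀ (q q' : ℝ → ℝ), q t = 0 →
      (∀ s ∈ Set.Icc t 1, HasDerivAt q (q' s) s) →
      IntervalIntegrable q' volume t 1 →
      IntervalIntegrable (fun s => q' s ^ 2) volume t 1 →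
      J qb (deriv qb) ≤ J q q' ∧
        ((∃ s ∈ Set.Icc t 1, q s ≠ qb s) → J qb (deriv qb) < J q q') := by
  intro J q q' hqt hq hq' hq'2
  change action t 1 p qb (deriv qb) ≤ action t 1 p q q' ∧
    (_ → action t 1 p qb (deriv qb) < action t 1 p q q')
  rw [action_eq_add_of_euler_lagrange ht1.le hqb hode hqb1 hq hq' hq'2 (hqt.trans hqbt.symm)]
  constructor
  · have := integral_nonneg (μ := volume) ht1.le fun s _ =>
      (by positivity : 0 ≤ (1:ℝ)/2 * (q' s - deriv qb s) ^ 2 + (1:ℝ)/2 * (q s - qb s) ^ 2)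
    linarith [sq_nonneg (q 1 - qb 1)]
  · rintro ⟨s, hs, hne⟩
    have hqc : ContinuousOn (fun s => q s - qb s) (Icc t 1) := fun s hs =>
      ((hq s hs).continuousAt.sub hqb.continuous.continuousAt).continuousWithinAt
    have := integral_half_sq_add_half_sq_pos ht1
      (hq'.sub_continuous_sq hq'2 (hqb.continuous_deriv one_le_two)) hqc
      ⟨s, hs, sub_ne_zero.mpr hne⟩
    linarith [sq_nonneg (q 1 - qb 1)]

theorem stmt_8 (t : ℝ) (ht : 0 ≤ t) (ht1 : t < 1) (p : ℝ)
    (qb : ℝ → ℝ) (hqb : ContDiff ℝ 2 qb)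
    (hode : ∀ s ∈ Set.Ioo t 1, deriv (deriv qb) s = qb s + p)
    (hqbt : qb t = 0) (hqb1 : deriv qb 1 + 2 * (qb 1 + p) = 0) :
    let J : (ℝ → ℝ) → (ℝ → ℝ) → ℝ := fun q q' =>
      (∫ s in t..1, ((1:ℝ)/2 * q' s ^ 2 + (1:ℝ)/2 * (q s + p) ^ 2)) + (q 1 + p) ^ 2
    ∀ (q q' : ℝ → ℝ), q t = 0 →
      (∀ s ∈ Set.Icc t 1, HasDerivAt q (q' s) s) →
      IntervalIntegrable q' volume t 1 →
      IntervalIntegrable (fun s => q' s ^ 2) volume t 1 →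
      J qb (deriv qb) ≤ J q q' ∧
        ((∃ s ∈ Set.Icc t 1, q s ≠ qb s) → J qb (deriv qb) < J q q') :=
  stmt_8_general t ht1 p qb hqb hode hqbt hqb1
end

section
/- Let U : ℝ → ℝ be bounded and measurable, let μ be a finite measure on ℝ, let g : ℝ → ℝ be bounded, and fix T > 0. Suppose u₁, u₂ : [0, T] × ℝ → ℝ are bounded, measurable in p, differentiable in t, and both satisfy ∂u/∂t(t,p) = −U(p)u(t,p) + ∫_ℝ (u(t, p + k) − u(t, p)) μ(dk) with u(0, p) = g(p). Then u₁ = u₂ on [0, T] × ℝ. -/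
/-!
The difference `v = u₁ - u₂` solves the same linear equation with `v 0 = 0`, and the right-hand
side at time `t` is bounded by `K = ‖U‖∞ + 2 μ(ℝ)` times `sup_p |v t p|`. Feeding a bound on `v`
through the derivative, as in Picard iteration, improves `|v t p| ≤ 2C (K t)ⁿ / n!` to the next
`n`; letting `n → ∞` gives `v = 0`.
-/

open MeasureTheory Set Filter Topology

section IteratedBound

variable {α E : Type*} [NormedAddCommGroup E] [NormedSpace ℝ E]
  {v D : ℝ → α → E} {T K C : ℝ}

lemma hasDerivAt_mul_pow_succ_div_factorial (C K x : ℝ) (n : ℕ) :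
    HasDerivAt (fun s => C * (K * s) ^ (n + 1) / (n + 1).factorial)
      (K * (C * (K * x) ^ n / n.factorial)) x := by
  refine (((((hasDerivAt_id x).const_mul K).pow (n + 1)).const_mul C).div_const _).congr_deriv ?_
  rw [Nat.factorial_succ, Nat.cast_mul]
  field_simp
  simp

lemma norm_le_mul_pow_div_factorial_of_hasDerivAt
    (hC : ∀ t ∈ Icc 0 T, ∀ p, ‖v t p‖ ≤ C) (h0 : ∀ p, v 0 p = 0)
    (hv : ∀ p, ∀ t ∈ Icc 0 T, HasDerivAt (fun t => v t p) (D t p) t)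
    (hD : ∀ t ∈ Icc 0 T, ∀ B, (∀ q, ‖v t q‖ ≤ B) → ∀ p, ‖D t p‖ ≤ K * B) (n : ℕ) :
    ∀ t ∈ Icc 0 T, ∀ p, ‖v t p‖ ≤ C * (K * t) ^ n / n.factorial := by
  induction n with
  | zero => simpa using hC
  | succ n ih =>
    intro t ht p
    exact image_norm_le_of_norm_deriv_right_le_deriv_boundary
      (fun s hs => (hv p s hs).continuousAt.continuousWithinAt)
      (fun s hs => (hv p s (Ico_subset_Icc_self hs)).hasDerivWithinAt)
      (by simp [h0]) (hasDerivAt_mul_pow_succ_div_factorial C K · n)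
      (fun s hs => hD s (Ico_subset_Icc_self hs) _ (ih s (Ico_subset_Icc_self hs)) p) ht

theorem eq_zero_of_hasDerivAt_of_norm_deriv_le
    (hC : ∀ t ∈ Icc 0 T, ∀ p, ‖v t p‖ ≤ C) (h0 : ∀ p, v 0 p = 0)
    (hv : ∀ p, ∀ t ∈ Icc 0 T, HasDerivAt (fun t => v t p) (D t p) t)
    (hD : ∀ t ∈ Icc 0 T, ∀ B, (∀ q, ‖v t q‖ ≤ B) → ∀ p, ‖D t p‖ ≤ K * B) :
    ∀ t ∈ Icc 0 T, ∀ p, v t p = 0 := by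
  intro t ht p
  have hlim : Tendsto (fun n : ℕ => C * ((K * t) ^ n / n.factorial)) atTop (𝓝 0) := by
    simpa using (FloorSemiring.tendsto_pow_div_factorial_atTop (K * t)).const_mul C
  refine norm_le_zero_iff.mp (ge_of_tendsto' hlim fun n => ?_)
  rw [← mul_div_assoc]
  exact norm_le_mul_pow_div_factorial_of_hasDerivAt hC h0 hv hD n t ht p

end IteratedBound

section JumpGenerator

variable {U : ℝ → ℝ} {μ : Measure ℝ} [IsFiniteMeasure μ]

noncomputable def jumpGenerator (U : ℝ → ℝ) (μ : Measure ℝ) (w : ℝ → ℝ) (p : ℝ) : ℝ :=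
  -(U p) * w p + ∫ k, (w (p + k) - w p) ∂μ

lemma abs_add_sub_le {w : ℝ → ℝ} {B : ℝ} (hw : ∀ q, |w q| ≤ B) (p k : ℝ) :
    |w (p + k) - w p| ≤ 2 * B := by
  linarith [abs_sub (w (p + k)) (w p), hw (p + k), hw p]

lemma integrable_add_sub {w : ℝ → ℝ} {B : ℝ} (hm : Measurable w) (hw : ∀ q, |w q| ≤ B)
    (p : ℝ) : Integrable (fun k => w (p + k) - w p) μ :=
  .of_bound ((hm.comp (measurable_const_add p)).sub measurable_const).aestronglyMeasurable
    (2 * B) (ae_of_all _ (abs_add_sub_le hw p))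

lemma jumpGenerator_sub {w₁ w₂ : ℝ → ℝ} {B₁ B₂ : ℝ} (hm₁ : Measurable w₁) (hm₂ : Measurable w₂)
    (hw₁ : ∀ q, |w₁ q| ≤ B₁) (hw₂ : ∀ q, |w₂ q| ≤ B₂) (p : ℝ) :
    jumpGenerator U μ (w₁ - w₂) p = jumpGenerator U μ w₁ p - jumpGenerator U μ w₂ p := by
  have hint : ∫ k, (w₁ (p + k) - w₂ (p + k) - (w₁ p - w₂ p)) ∂μ
      = ∫ k, (w₁ (p + k) - w₁ p) ∂μ - ∫ k, (w₂ (p + k) - w₂ p) ∂μ := by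
    rw [← integral_sub (integrable_add_sub hm₁ hw₁ p) (integrable_add_sub hm₂ hw₂ p)]
    congr 1 with k
    ring
  simp only [jumpGenerator, Pi.sub_apply, hint]
  ring

lemma abs_jumpGenerator_le {CU : ℝ} (hU : ∀ p, |U p| ≤ CU) {w : ℝ → ℝ} {B : ℝ}
    (hw : ∀ q, |w q| ≤ B) (p : ℝ) :
    |jumpGenerator U μ w p| ≤ (CU + 2 * μ.real univ) * B := by
  have hkill : |-(U p) * w p| ≤ CU * B := by
    rw [abs_mul, abs_neg]
    exact mul_le_mul (hU p) (hw p) (abs_nonneg _) ((abs_nonneg _).trans (hU p))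
  have hjump : |∫ k, (w (p + k) - w p) ∂μ| ≤ 2 * B * μ.real univ :=
    norm_integral_le_of_norm_le_const (f := fun k => w (p + k) - w p)
      (ae_of_all _ (abs_add_sub_le hw p))
  calc |jumpGenerator U μ w p| ≤ |-(U p) * w p| + |∫ k, (w (p + k) - w p) ∂μ| := abs_add_le _ _
    _ ≤ CU * B + 2 * B * μ.real univ := add_le_add hkill hjump
    _ = (CU + 2 * μ.real univ) * B := by ring

end JumpGenerator

theorem stmt_15_general (U : ℝ → ℝ) (CU : ℝ) (hU : ∀ p, |U p| ≤ CU)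
    (μ : Measure ℝ) [IsFiniteMeasure μ] (g : ℝ → ℝ)
    (T : ℝ) (u₁ u₂ : ℝ → ℝ → ℝ)
    (C : ℝ) (hb1 : ∀ t p, |u₁ t p| ≤ C) (hb2 : ∀ t p, |u₂ t p| ≤ C)
    (hm1 : ∀ t, Measurable (u₁ t)) (hm2 : ∀ t, Measurable (u₂ t))
    (hpde1 : ∀ p : ℝ, ∀ t ∈ Set.Icc (0:ℝ) T, HasDerivAt (fun t => u₁ t p)
      (-(U p) * u₁ t p + ∫ k, (u₁ t (p + k) - u₁ t p) ∂μ) t)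
    (hpde2 : ∀ p : ℝ, ∀ t ∈ Set.Icc (0:ℝ) T, HasDerivAt (fun t => u₂ t p)
      (-(U p) * u₂ t p + ∫ k, (u₂ t (p + k) - u₂ t p) ∂μ) t)
    (h01 : ∀ p, u₁ 0 p = g p) (h02 : ∀ p, u₂ 0 p = g p) :
    ∀ t ∈ Set.Icc (0:ℝ) T, ∀ p, u₁ t p = u₂ t p := by
  let v : ℝ → ℝ → ℝ := fun t => u₁ t - u₂ t
  have hv_bound : ∀ t ∈ Icc 0 T, ∀ p, ‖v t p‖ ≤ 2 * C := fun t _ p => by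
    simpa [v, two_mul] using (abs_sub _ _).trans (add_le_add (hb1 t p) (hb2 t p))
  have hv0 : ∀ p, v 0 p = 0 := fun p => by simp [v, h01, h02]
  have hv_deriv : ∀ p, ∀ t ∈ Icc 0 T,
      HasDerivAt (fun t => v t p) (jumpGenerator U μ (v t) p) t := fun p t ht => by
    rw [jumpGenerator_sub (hm1 t) (hm2 t) (hb1 t) (hb2 t)]
    exact (hpde1 p t ht).sub (hpde2 p t ht)
  have hv_deriv_bound : ∀ t ∈ Icc 0 T, ∀ B, (∀ q, ‖v t q‖ ≤ B) →
      ∀ p, ‖jumpGenerator U μ (v t) p‖ ≤ (CU + 2 * μ.real univ) * B := fun t _ B hB p =>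
    abs_jumpGenerator_le hU hB p
  intro t ht p
  exact sub_eq_zero.mp (eq_zero_of_hasDerivAt_of_norm_deriv_le hv_bound hv0 hv_deriv
    hv_deriv_bound t ht p)

theorem stmt_15 (U : ℝ → ℝ) (hUm : Measurable U) (CU : ℝ) (hU : ∀ p, |U p| ≤ CU)
    (μ : Measure ℝ) [IsFiniteMeasure μ] (g : ℝ → ℝ) (Cg : ℝ) (hg : ∀ p, |g p| ≤ Cg)
    (T : ℝ) (hT : 0 < T) (u₁ u₂ : ℝ → ℝ → ℝ)
    (C : ℝ) (hb1 : ∀ t p, |u₁ t p| ≤ C) (hb2 : ∀ t p, |u₂ t p| ≤ C)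
    (hm1 : ∀ t, Measurable (u₁ t)) (hm2 : ∀ t, Measurable (u₂ t))
    (hpde1 : ∀ p : ℝ, ∀ t ∈ Set.Icc (0:ℝ) T, HasDerivAt (fun t => u₁ t p)
      (-(U p) * u₁ t p + ∫ k, (u₁ t (p + k) - u₁ t p) ∂μ) t)
    (hpde2 : ∀ p : ℝ, ∀ t ∈ Set.Icc (0:ℝ) T, HasDerivAt (fun t => u₂ t p)
      (-(U p) * u₂ t p + ∫ k, (u₂ t (p + k) - u₂ t p) ∂μ) t)
    (h01 : ∀ p, u₁ 0 p = g p) (h02 : ∀ p, u₂ 0 p = g p) :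
    ∀ t ∈ Set.Icc (0:ℝ) T, ∀ p, u₁ t p = u₂ t p :=
  stmt_15_general U CU hU μ g T u₁ u₂ C hb1 hb2 hm1 hm2 hpde1 hpde2 h01 h02
end
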